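/- arXiv:1007.5159 — 3 statements merged into one kernel-verified Lean document; each statement's English description precedes it below -/
import Mathlib

section
/- Consider the disease-free equilibrium with mosquitoes present: if μ_b η_A > (η_A+μ_A)(μ_m+c), then the point with S_h = N_h, E_h = I_h = R_h = 0, A_m = K(1 − (η_A+μ_A)(μ_m+c)/(μ_b η_A)), S_m = η_A A_m/(μ_m+c), E_m = I_m = 0 is an equilibrium of the dengue system with constant control c, and A_m > 0 and S_m > 0 at this equilibrium. -/
theorem disease_free_equilibrium_with_mosquitoes
    (μh νh ηh B βmh βhm Nh μb K ηA μA μm ηm c : ℝ)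
    (hμh : 0 < μh) (hνh : 0 < νh) (hηh : 0 < ηh) (hB : 0 < B) (hβmh : 0 < βmh)
    (hβhm : 0 < βhm) (hNh : 0 < Nh) (hμb : 0 < μb) (hK : 0 < K) (hηA : 0 < ηA)
    (hμA : 0 < μA) (hμm : 0 < μm) (hηm : 0 < ηm) (hc : 0 ≤ c)
    (hcond : (ηA + μA) * (μm + c) < μb * ηA)
    (Sh Eh Ih Rh Am Sm Em Im : ℝ)
    (hSh : Sh = Nh) (hEh : Eh = 0) (hIh : Ih = 0) (hRh : Rh = 0)
    (hAm : Am = K * (1 - (ηA + μA) * (μm + c) / (μb * ηA)))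
    (hSm : Sm = ηA * Am / (μm + c)) (hEm : Em = 0) (hIm : Im = 0) :
    (μh * Nh - (B * βmh * Im / Nh + μh) * Sh = 0 ∧
     B * βmh * Im / Nh * Sh - (νh + μh) * Eh = 0 ∧
     νh * Eh - (ηh + μh) * Ih = 0 ∧
     ηh * Ih - μh * Rh = 0 ∧
     μb * (1 - Am / K) * (Sm + Em + Im) - (ηA + μA) * Am = 0 ∧
     -(B * βhm * Ih / Nh + μm) * Sm + ηA * Am - c * Sm = 0 ∧
     B * βhm * Ih / Nh * Sm - (μm + ηm) * Em - c * Em = 0 ∧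
     ηm * Em - μm * Im - c * Im = 0) ∧
    0 < Am ∧ 0 < Sm := by
  have hmc : 0 < μm + c := by linarith
  have hAmpos : 0 < Am := by
    rw [hAm]
    have h1 : (ηA + μA) * (μm + c) / (μb * ηA) < 1 := by
      rw [div_lt_one (by positivity)]
      exact hcond
    have := mul_pos hK (by linarith : (0:ℝ) < 1 - (ηA + μA) * (μm + c) / (μb * ηA))
    exact this
  have hSmpos : 0 < Sm := by rw [hSm]; positivity
  refine ⟨⟨?_, ?_, ?_, ?_, ?_, ?_, ?_, ?_⟩, hAmpos, hSmpos⟩ <;>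
    subst hSh hEh hIh hRh hAm hSm hEm hIm <;>
    field_simp <;> ring
end

section
/- If at the mosquito-free state the condition μ_b η_A ≤ (η_A+μ_A)(μ_m+c) holds, then the only nonnegative equilibrium of the mosquito subsystem (with I_h = 0) is A_m = S_m = E_m = I_m = 0. -/
theorem mosquito_free_unique_equilibrium
    (μb K ηA μA μm ηm c : ℝ)
    (hμb : 0 < μb) (hK : 0 < K) (hηA : 0 < ηA) (hμA : 0 < μA)
    (hμm : 0 < μm) (hηm : 0 < ηm) (hc : 0 ≤ c)
    (hcond : μb * ηA ≤ (ηA + μA) * (μm + c))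
    (Am Sm Em Im : ℝ)
    (hAm0 : 0 ≤ Am) (hSm0 : 0 ≤ Sm) (hEm0 : 0 ≤ Em) (hIm0 : 0 ≤ Im) (hAmK : Am ≤ K)
    (e1 : μb * (1 - Am / K) * (Sm + Em + Im) - (ηA + μA) * Am = 0)
    (e2 : -μm * Sm + ηA * Am - c * Sm = 0)
    (e3 : -(μm + ηm) * Em - c * Em = 0)
    (e4 : ηm * Em - μm * Im - c * Im = 0) :
    Am = 0 ∧ Sm = 0 ∧ Em = 0 ∧ Im = 0 := by
  have hmc : 0 < μm + c := by linarith
  have hEm : Em = 0 := by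
    have : (μm + ηm + c) * Em = 0 := by linarith
    have h : μm + ηm + c > 0 := by linarith
    exact (mul_eq_zero.mp this).resolve_left (ne_of_gt h)
  have hIm : Im = 0 := by
    have : (μm + c) * Im = 0 := by rw [hEm] at e4; linarith
    exact (mul_eq_zero.mp this).resolve_left (ne_of_gt hmc)
  subst hEm hIm
  -- Sm = ηA * Am / (μm + c)
  have hSm : (μm + c) * Sm = ηA * Am := by linarith
  have hAm : Am = 0 := by
    by_contra h
    have hApos : 0 < Am := lt_of_le_of_ne hAm0 (Ne.symm h)
    -- from e1: μb*(1 - Am/K)*Sm = (ηA+μA)*Am, multiply by (μm+c):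
    have key : μb * (1 - Am / K) * (ηA * Am) = (ηA + μA) * Am * (μm + c) := by
      have := congrArg (· * (μm + c)) e1
      simp only [zero_mul, sub_mul] at this
      linear_combination this - (μb * (1 - Am / K)) * hSm
    have hfrac : 0 < Am / K := div_pos hApos hK
    have hlt : μb * (1 - Am / K) * (ηA * Am) < μb * ηA * Am := by
      have : μb * (1 - Am / K) < μb := by nlinarith
      nlinarith [mul_pos hηA hApos]
    have hge : (ηA + μA) * (μm + c) * Am ≥ μb * ηA * Am := by
      nlinarith
    nlinarith
  subst hAm
  have : Sm = 0 := by
    have : (μm + c) * Sm = 0 := by linarith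
    exact (mul_eq_zero.mp this).resolve_left (ne_of_gt hmc)
  exact ⟨rfl, this, rfl, rfl⟩
end

section
/- The region Ω = {(S_h,E_h,I_h,R_h) : S_h,E_h,I_h,R_h ≥ 0 and S_h+E_h+I_h+R_h = N_h} is positively invariant for the human subsystem of the dengue model: if the initial condition lies in Ω, the solution remains in Ω for all t ≥ 0. -/
/-!
Each compartment obeys a linear equation `f' = r - a f` with continuous rate `a` and a source `r`
that is nonnegative once the compartments upstream are known to be nonnegative
(`S → E → I → R`). Multiplying by the integrating factor `exp (∫₀ᵗ a)` turns such an equation into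
one with nonnegative derivative, so nonnegativity of `f 0` propagates forward. The total population
satisfies `N' = μ (N_h - N)`, so `N - N_h` solves a source-free linear equation and vanishes.
-/

open Real

section LinearComparison

variable {f a r : ℝ → ℝ}

theorem hasDerivAt_exp_integral_mul (ha : Continuous a) {f' : ℝ} {t : ℝ}
    (hf : HasDerivAt f f' t) :
    HasDerivAt (fun s => exp (∫ u in (0:ℝ)..s, a u) * f s)
      (exp (∫ u in (0:ℝ)..t, a u) * (f' + a t * f t)) t := by
  have hA := (ha.integral_hasStrictDerivAt 0 t).hasDerivAt
  exact (hA.exp.mul hf).congr_deriv (by ring)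

theorem nonneg_of_hasDerivAt_sub_mul (ha : Continuous a) (hr : ∀ t ≥ (0:ℝ), 0 ≤ r t)
    (hf : ∀ t ≥ (0:ℝ), HasDerivAt f (r t - a t * f t) t) (h0 : 0 ≤ f 0) :
    ∀ t ≥ (0:ℝ), 0 ≤ f t := by
  set g : ℝ → ℝ := fun s => exp (∫ u in (0:ℝ)..s, a u) * f s
  have hg : ∀ t ≥ (0:ℝ), HasDerivAt g (exp (∫ u in (0:ℝ)..t, a u) * r t) t := fun t ht =>
    (hasDerivAt_exp_integral_mul ha (hf t ht)).congr_deriv (by ring)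
  have hmono : MonotoneOn g (Set.Ici 0) := by
    refine monotoneOn_of_hasDerivWithinAt_nonneg (convex_Ici 0)
      (fun t ht => (hg t ht).continuousAt.continuousWithinAt)
      (fun t ht => (hg t (interior_subset ht).out).hasDerivWithinAt) fun t ht => ?_
    have := hr t (interior_subset ht).out
    positivity
  intro t ht
  have hgt : 0 ≤ g t := by
    calc (0:ℝ) ≤ f 0 := h0
      _ = g 0 := by simp [g]
      _ ≤ g t := hmono Set.self_mem_Ici ht ht
  exact nonneg_of_mul_nonneg_right hgt (exp_pos _)

theorem eq_zero_of_hasDerivAt_neg_mul (ha : Continuous a)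
    (hf : ∀ t ≥ (0:ℝ), HasDerivAt f (-(a t * f t)) t) (h0 : f 0 = 0) :
    ∀ t ≥ (0:ℝ), f t = 0 := by
  have hpos := nonneg_of_hasDerivAt_sub_mul (r := 0) ha (fun _ _ => le_rfl)
    (fun t ht => (hf t ht).congr_deriv (by simp)) h0.ge
  have hneg := nonneg_of_hasDerivAt_sub_mul (f := -f) (r := 0) ha (fun _ _ => le_rfl)
    (fun t ht => (hf t ht).neg.congr_deriv (by simp)) (by simp [h0])
  intro t ht
  linarith [hpos t ht, hneg t ht, show (-f) t = -f t from rfl]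

end LinearComparison

theorem human_region_positively_invariant
    (Sh Eh Ih Rh Im : ℝ → ℝ)
    (μh νh ηh B βmh Nh : ℝ)
    (hμh : 0 < μh) (hνh : 0 < νh) (hηh : 0 < ηh) (hB : 0 < B) (hβmh : 0 < βmh)
    (hNh : 0 < Nh)
    (hImcont : Continuous Im) (hImnn : ∀ t, 0 ≤ Im t)
    (hSh : ∀ t ≥ (0:ℝ), HasDerivAt Sh (μh * Nh - (B * βmh * Im t / Nh + μh) * Sh t) t)
    (hEh : ∀ t ≥ (0:ℝ), HasDerivAt Eh (B * βmh * Im t / Nh * Sh t - (νh + μh) * Eh t) t)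
    (hIh : ∀ t ≥ (0:ℝ), HasDerivAt Ih (νh * Eh t - (ηh + μh) * Ih t) t)
    (hRh : ∀ t ≥ (0:ℝ), HasDerivAt Rh (ηh * Ih t - μh * Rh t) t)
    (h0 : 0 ≤ Sh 0 ∧ 0 ≤ Eh 0 ∧ 0 ≤ Ih 0 ∧ 0 ≤ Rh 0 ∧
          Sh 0 + Eh 0 + Ih 0 + Rh 0 = Nh) :
    ∀ t ≥ (0:ℝ), 0 ≤ Sh t ∧ 0 ≤ Eh t ∧ 0 ≤ Ih t ∧ 0 ≤ Rh t ∧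
      Sh t + Eh t + Ih t + Rh t = Nh := by
  obtain ⟨hS0, hE0, hI0, hR0, hsum0⟩ := h0
  have hS := nonneg_of_hasDerivAt_sub_mul (by fun_prop) (fun _ _ => by positivity) hSh hS0
  have hE := nonneg_of_hasDerivAt_sub_mul continuous_const
    (fun t ht => by have := hS t ht; have := hImnn t; positivity) hEh hE0
  have hI := nonneg_of_hasDerivAt_sub_mul continuous_const
    (fun t ht => by have := hE t ht; positivity) hIh hI0
  have hR := nonneg_of_hasDerivAt_sub_mul continuous_const
    (fun t ht => by have := hI t ht; positivity) hRh hR0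
  have hsum := eq_zero_of_hasDerivAt_neg_mul (f := fun t => Sh t + Eh t + Ih t + Rh t - Nh)
    (a := fun _ => μh) continuous_const
    (fun t ht => ((((hSh t ht).add (hEh t ht)).add (hIh t ht)).add (hRh t ht)).sub_const Nh
      |>.congr_deriv (by ring))
    (by simp [hsum0])
  intro t ht
  exact ⟨hS t ht, hE t ht, hI t ht, hR t ht, sub_eq_zero.mp (hsum t ht)⟩
end
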